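/- Let p be an odd prime, k = 2, and let A_1, e_K, b_1 be integers with 1 ≤ A_1 ≤ e_K, p | b_1, and p < b_1 < p^2. Then the two Eisenstein polynomials f(X) = X^{p^2} + (-1)^{b_1-1} π_K^{A_1+e_K} X^{p^2-b_1+1} + (-1)^{b_1} π_K^{A_1} X^{p^2-b_1} - π_K and g(X) = X^{p^2} + (-1)^{b_1} π_K^{A_1} X^{p^2-b_1} - π_K over a finite extension K of Q_p with uniformizer π_K both generate totally ramified extensions of degree p^2 whose indices of inseparability are i_0 = p^2(A_1 + e_K) - b_1, i_1 = p^2 A_1 - b_1, i_2 = 0. -/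

import Mathlib

open Polynomial Classical

/-- A rank-one valuation `v` on `L`, written additively with values in `ℚ` and
junk value at `0`, which restricts to a normalized (`ℤ`-valued, surjective onto
`ℤ`) complete discrete valuation on the subfield `K`, and whose values on `L`
lie in `(1/n)ℤ`. -/
structure ExtValuation (K L : Type) [Field K] [Field L] [Algebra K L]
    (v : L → ℚ) (n : ℕ) : Prop where
  map_mul : ∀ x y : L, x ≠ 0 → y ≠ 0 → v (x * y) = v x + v y
  map_add : ∀ x y : L, x ≠ 0 → y ≠ 0 → x + y ≠ 0 → min (v x) (v y) ≤ v (x + y)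
  int_on_base : ∀ x : K, x ≠ 0 → ∃ m : ℤ, v (algebraMap K L x) = m
  exists_uniformizer : ∃ x : K, x ≠ 0 ∧ v (algebraMap K L x) = 1
  denom : ∀ x : L, x ≠ 0 → ∃ m : ℤ, v x = (m : ℚ) / n
  complete : ∀ a : ℕ → K,
    (∀ N : ℚ, ∃ M : ℕ, ∀ i ≥ M, ∀ j ≥ M,
      a i = a j ∨ N ≤ v (algebraMap K L (a i - a j))) →
    ∃ l : K, ∀ N : ℚ, ∃ M : ℕ, ∀ i ≥ M,
      a i = l ∨ N ≤ v (algebraMap K L (a i - l))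

/-- The residue field of `K` has characteristic `p`: `p` lies in the maximal
ideal of the valuation ring of `K`. -/
def ResidueCharP (K L : Type) [Field K] [Field L] [Algebra K L]
    (v : L → ℚ) (p : ℕ) : Prop :=
  (p : K) = 0 ∨ 0 < v (algebraMap K L (p : K))

/-- The residue field of `K` is perfect: every unit of the valuation ring is a
`p`-th power modulo the maximal ideal. -/
def PerfectResidue (K L : Type) [Field K] [Field L] [Algebra K L]
    (v : L → ℚ) (p : ℕ) : Prop :=
  ∀ x : K, x ≠ 0 → v (algebraMap K L x) = 0 →
    ∃ y : K, x = y ^ p ∨ (x - y ^ p ≠ 0 ∧ 0 < v (algebraMap K L (x - y ^ p)))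

/-- `ω` is a nonzero Teichmüller representative of `K`: a unit of the valuation
ring admitting `p^m`-th roots for every `m`. -/
def IsTeichmuller (K L : Type) [Field K] [Field L] [Algebra K L]
    (v : L → ℚ) (p : ℕ) (ω : K) : Prop :=
  ω ≠ 0 ∧ v (algebraMap K L ω) = 0 ∧ ∀ m : ℕ, ∃ y : K, y ^ p ^ m = ω

/-- `ĩ_j = min{n·v(c_h) − h : 1 ≤ h ≤ n, v_p(h) ≤ j}`, computed in `ℕ∞` from
the function `w h = n·(valuation of c_h)` data `w h = v(c_h)`. -/
noncomputable def itildeIdx (p n : ℕ) (w : ℕ → ℕ∞) (j : ℕ) : ℕ∞ :=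
  ⨅ h : {h : ℕ // 1 ≤ h ∧ h ≤ n ∧ padicValNat p h ≤ j},
    ((n : ℕ∞) * w h.1 - (h.1 : ℕ∞))

/-- `i_j = min{ĩ_{j'} + (j' − j) n e_K : j ≤ j' ≤ k}`. -/
noncomputable def insepIdx (p n k : ℕ) (eK : ℕ∞) (w : ℕ → ℕ∞) (j : ℕ) : ℕ∞ :=
  ⨅ j' : {j' : ℕ // j ≤ j' ∧ j' ≤ k},
    itildeIdx p n w j'.1 + ((j'.1 : ℕ∞) - (j : ℕ∞)) * (n : ℕ∞) * eK

/-- The valuation (in `ℕ∞`, with `⊤` for the zero coefficient) of the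
coefficient `c_h` of the minimal polynomial
`X^n − c_1 X^{n-1} + ⋯ + (−1)^n c_n` of `πL`, so that
`(−1)^h c_h = coeff (n−h)`. -/
noncomputable def coeffVal (K L : Type) [Field K] [Field L] [Algebra K L]
    (v : L → ℚ) (n : ℕ) (πL : L) (h : ℕ) : ℕ∞ :=
  if (minpoly K πL).coeff (n - h) = 0 then ⊤
  else ((v (algebraMap K L ((minpoly K πL).coeff (n - h)))).num).toNat

/-- `e_K = v_K(p)`, with `e_K = ∞` when `char K = p`. -/
noncomputable def eAbs (K L : Type) [Field K] [Field L] [Algebra K L]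
    (v : L → ℚ) (p : ℕ) : ℕ∞ :=
  if (p : K) = 0 then ⊤ else ((v (algebraMap K L (p : K))).num).toNat

/-- `L/K` has indices of inseparability `i 0, …, i k`: the indices computed
from the minimal polynomial of a uniformizer of `L` are given by `i`. -/
def HasInsepIndices (K L : Type) [Field K] [Field L] [Algebra K L]
    (v : L → ℚ) (p n k : ℕ) (i : ℕ → ℕ∞) : Prop :=
  ∃ πL : L, v πL = 1 / (n : ℚ) ∧ Algebra.adjoin K {πL} = ⊤ ∧
    ∀ j ≤ k, insepIdx p n k (eAbs K L v p) (coeffVal K L v n πL) j = i j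

/-!
Both polynomials are Eisenstein, so the Newton polygon has the single slope `1/p²` and a root
`π` has valuation `1/p²`. The monomials `c πⁱ` with `c ∈ Kˣ`, `i < p²` then have pairwise distinct
valuations modulo `ℤ`, so no nonzero polynomial of degree `< p²` vanishes at `π`; hence the
polynomial is the minimal polynomial of `π`, of degree `p² = [L : K]`. At most three coefficients
`c_h` with `h ≥ 1` are nonzero: `c_{b₁}` of valuation `A₁` (and `v_p(b₁) = 1`), `c_{p²} = π_K`,
and `c_{b₁-1}`, which is `0` for `g` and of valuation `A₁ + e_K` for `f`. That last coefficient
never attains a minimum in the formulas for `ĩ_j` and `i_j`, which is why `f` and `g` have the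
same indices of inseparability.
-/

theorem Polynomial.Monic.aeval_eq_pow_add_sum {K L : Type} [Field K] [Field L] [Algebra K L]
    {F : K[X]} (hF : F.Monic) (x : L) :
    aeval x F = x ^ F.natDegree +
      ∑ i ∈ Finset.range F.natDegree, algebraMap K L (F.coeff i) * x ^ i := by
  conv_lhs => rw [hF.as_sum]
  simp [map_sum]

theorem Nat.eq_of_int_add_div_eq {n i j : ℕ} {a b : ℤ} (hi : i < n) (hj : j < n)
    (h : (a : ℚ) + i / n = b + j / n) : i = j := by
  have hn : (n : ℚ) ≠ 0 := by exact_mod_cast (by omega : n ≠ 0)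
  have hZ : (i : ℤ) + a * n = j + b * n := by
    field_simp at h
    exact_mod_cast (by linarith : (i : ℚ) + a * n = j + b * n)
  have := congrArg (· % (n : ℤ)) hZ
  simp only [Int.add_mul_emod_self_right] at this
  rwa [Int.emod_eq_of_lt (by positivity) (by omega), Int.emod_eq_of_lt (by positivity) (by omega),
    Nat.cast_inj] at this

theorem Polynomial.ne_zero_of_aeval_eq_zero {K L : Type} [Field K] [Field L] [Algebra K L]
    {F : K[X]} (h0 : F.coeff 0 ≠ 0) {x : L} (hx : aeval x F = 0) : x ≠ 0 := by
  rintro rfl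
  exact h0 (by simpa [aeval_def, eval₂_at_zero] using hx)

namespace ExtValuation

variable {K L : Type} [Field K] [Field L] [Algebra K L] {v : L → ℚ} {n : ℕ}
  (hv : ExtValuation K L v n)
include hv

theorem map_one : v 1 = 0 := by
  have := hv.map_mul 1 1 one_ne_zero one_ne_zero
  rw [mul_one] at this
  linarith

theorem map_neg_one : v (-1) = 0 := by
  have := hv.map_mul (-1) (-1) (by norm_num) (by norm_num)
  rw [neg_one_mul, neg_neg, hv.map_one] at this
  linarith

theorem map_neg {x : L} (hx : x ≠ 0) : v (-x) = v x := by
  rw [← neg_one_mul, hv.map_mul _ _ (by norm_num) hx, hv.map_neg_one, zero_add]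

theorem map_pow {x : L} (hx : x ≠ 0) (k : ℕ) : v (x ^ k) = k * v x := by
  induction k with
  | zero => simpa using hv.map_one
  | succ k ih =>
    rw [pow_succ, hv.map_mul _ _ (pow_ne_zero _ hx) hx, ih]
    push_cast
    ring

theorem map_neg_one_pow_mul_pow {π : K} (hπ : π ≠ 0) (hvπ : v (algebraMap K L π) = 1)
    (s A : ℕ) : v (algebraMap K L ((-1) ^ s * π ^ A)) = A := by
  have hπL : algebraMap K L π ≠ 0 := (_root_.map_ne_zero _).mpr hπ
  rw [_root_.map_mul, _root_.map_pow, _root_.map_pow, _root_.map_neg, _root_.map_one,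
    hv.map_mul _ _ (pow_ne_zero _ (by norm_num)) (pow_ne_zero _ hπL),
    hv.map_pow (by norm_num), hv.map_pow hπL, hv.map_neg_one, hvπ]
  ring

theorem add_eq_zero_or_lt {c : ℚ} {y z : L} (hy : y = 0 ∨ c < v y) (hz : z = 0 ∨ c < v z) :
    y + z = 0 ∨ c < v (y + z) := by
  by_cases hy0 : y = 0
  · simpa [hy0] using hz
  by_cases hz0 : z = 0
  · simpa [hz0] using hy
  by_cases hyz : y + z = 0
  · exact Or.inl hyz
  exact Or.inr <| lt_of_lt_of_le (lt_min (hy.resolve_left hy0) (hz.resolve_left hz0))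
    (hv.map_add y z hy0 hz0 hyz)

theorem sum_eq_zero_or_lt {ι : Type*} {c : ℚ} (s : Finset ι) {t : ι → L}
    (h : ∀ i ∈ s, t i = 0 ∨ c < v (t i)) : ∑ i ∈ s, t i = 0 ∨ c < v (∑ i ∈ s, t i) := by
  induction s using Finset.cons_induction with
  | empty => simp
  | cons a s ha ih =>
    rw [Finset.sum_cons]
    exact hv.add_eq_zero_or_lt (h a (Finset.mem_cons_self a s))
      (ih fun i hi => h i (Finset.mem_cons_of_mem hi))

theorem add_ne_zero_of_lt {x y : L} (hx : x ≠ 0) (hy : y = 0 ∨ v x < v y) : x + y ≠ 0 := by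
  intro hxy
  have hyx : y = -x := eq_neg_of_add_eq_zero_right hxy
  rcases hy with rfl | hy
  · exact hx (by simpa using hyx)
  · rw [hyx, hv.map_neg hx] at hy
    exact lt_irrefl _ hy

theorem sum_ne_zero_of_injOn {ι : Type*} {s : Finset ι} {t : ι → L} (hs : s.Nonempty)
    (h0 : ∀ i ∈ s, t i ≠ 0) (hinj : Set.InjOn (fun i => v (t i)) s) : ∑ i ∈ s, t i ≠ 0 := by
  obtain ⟨i₀, hi₀, hmin⟩ := s.exists_min_image (fun i => v (t i)) hs
  rw [← Finset.add_sum_erase s t hi₀]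
  refine hv.add_ne_zero_of_lt (h0 i₀ hi₀) (hv.sum_eq_zero_or_lt _ fun i hi => Or.inr ?_)
  have his := Finset.mem_of_mem_erase hi
  exact lt_of_le_of_ne (hmin i his)
    fun h => Finset.ne_of_mem_erase hi (hinj his hi₀ h.symm)

theorem map_algebraMap_mul_pow {c : K} {x : L} (hc : c ≠ 0) (hx : x ≠ 0) (i : ℕ) :
    v (algebraMap K L c * x ^ i) = v (algebraMap K L c) + i * v x := by
  rw [hv.map_mul _ _ ((_root_.map_ne_zero _).mpr hc) (pow_ne_zero _ hx), hv.map_pow hx]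

theorem map_eq_of_aeval_eisenstein_eq_zero {F : K[X]} (hF : F.Monic) (hdeg : 0 < F.natDegree)
    (hcoeff : ∀ i < F.natDegree, F.coeff i = 0 ∨ 1 ≤ v (algebraMap K L (F.coeff i)))
    (h0 : F.coeff 0 ≠ 0) (hv0 : v (algebraMap K L (F.coeff 0)) = 1)
    {x : L} (hx : aeval x F = 0) : v x = 1 / F.natDegree := by
  set d := F.natDegree
  set term := fun i => algebraMap K L (F.coeff i) * x ^ i
  have hx0 : x ≠ 0 := ne_zero_of_aeval_eq_zero h0 hx
  have hdQ : (0 : ℚ) < d := by exact_mod_cast hdeg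
  have hterm : ∀ i < d, term i = 0 ∨ 1 + i * v x ≤ v (term i) := by
    intro i hi
    by_cases hc : F.coeff i = 0
    · simp [term, hc]
    · rw [hv.map_algebraMap_mul_pow hc hx0]
      exact Or.inr (by linarith [(hcoeff i hi).resolve_left hc])
  rw [hF.aeval_eq_pow_add_sum] at hx
  rcases lt_trichotomy (v x) (1 / d) with hlt | heq | hgt
  · exfalso
    have hdt : d * v x < 1 := by rwa [lt_div_iff₀ hdQ, mul_comm] at hlt
    refine hv.add_ne_zero_of_lt (pow_ne_zero _ hx0) ?_ hx
    rw [hv.map_pow hx0]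
    refine hv.sum_eq_zero_or_lt _ fun i hi => ?_
    have hi := Finset.mem_range.mp hi
    refine (hterm i hi).imp_right fun h => lt_of_lt_of_le ?_ h
    have hiQ : (i : ℚ) < d := by exact_mod_cast hi
    rcases le_or_gt (v x) 0 with hneg | hpos <;> nlinarith
  · exact heq
  · exfalso
    have hpos : 0 < v x := lt_trans (by positivity) hgt
    have hdt : 1 < d * v x := by rwa [div_lt_iff₀ hdQ, mul_comm] at hgt
    rw [← Finset.add_sum_erase _ _ (Finset.mem_range.mpr hdeg), add_left_comm] at hx
    refine hv.add_ne_zero_of_lt (by simpa [term] using h0) ?_ hx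
    rw [show v (term 0) = 1 by simpa [term] using hv0]
    refine hv.add_eq_zero_or_lt (Or.inr (by rwa [hv.map_pow hx0])) ?_
    refine hv.sum_eq_zero_or_lt _ fun i hi => ?_
    have hi0 : (1 : ℚ) ≤ i := by
      exact_mod_cast Nat.one_le_iff_ne_zero.mpr (Finset.ne_of_mem_erase hi)
    refine (hterm i (Finset.mem_range.mp (Finset.mem_of_mem_erase hi))).imp_right
      fun h => lt_of_lt_of_le ?_ h
    nlinarith

theorem aeval_ne_zero_of_natDegree_lt {x : L} (hx0 : x ≠ 0) (hx : v x = 1 / n) {q : K[X]}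
    (hq : q ≠ 0) (hdeg : q.natDegree < n) : aeval x q ≠ 0 := by
  have hterm : ∀ i, q.coeff i ≠ 0 →
      v (q.coeff i • x ^ i) = v (algebraMap K L (q.coeff i)) + i / n :=
    fun i hi => by rw [Algebra.smul_def, hv.map_algebraMap_mul_pow hi hx0, hx, mul_one_div]
  have hcoeff : ∀ i, q.coeff i • x ^ i ≠ 0 → q.coeff i ≠ 0 := fun i h hc => h (by simp [hc])
  rw [aeval_eq_sum_range, ← Finset.sum_filter_ne_zero]
  refine hv.sum_ne_zero_of_injOn ⟨q.natDegree, ?_⟩ (fun i hi => (Finset.mem_filter.mp hi).2) ?_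
  · simp [Finset.mem_filter, hx0, hq]
  · intro i hi j hj hij
    simp only [Finset.coe_filter, Finset.mem_range, Set.mem_ofPred_eq] at hi hj
    obtain ⟨a, ha⟩ := hv.int_on_base _ (hcoeff i hi.2)
    obtain ⟨b, hb⟩ := hv.int_on_base _ (hcoeff j hj.2)
    simp only [hterm i (hcoeff i hi.2), hterm j (hcoeff j hj.2), ha, hb] at hij
    exact Nat.eq_of_int_add_div_eq (by omega) (by omega) hij

theorem minpoly_eq_of_aeval_eq_zero {x : L} (hx0 : x ≠ 0) (hx : v x = 1 / n) {F : K[X]}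
    (hF : F.Monic) (hdeg : F.natDegree = n) (hroot : aeval x F = 0) : minpoly K x = F := by
  refine (minpoly.unique K x hF hroot fun q hq hqx => ?_).symm
  rw [degree_eq_natDegree hq.ne_zero]
  refine degree_le_of_natDegree_le (hdeg ▸ not_lt.mp fun h => ?_)
  exact hv.aeval_ne_zero_of_natDegree_lt hx0 hx hq.ne_zero h hqx

end ExtValuation

theorem padicValNat_eq_one_of_dvd_of_lt_sq {p b : ℕ} [Fact p.Prime] (hb0 : b ≠ 0) (hpb : p ∣ b)
    (hb : b < p ^ 2) : padicValNat p b = 1 := by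
  refine le_antisymm ?_ (one_le_padicValNat_of_dvd hb0 hpb)
  by_contra! h
  have := Nat.le_of_dvd (Nat.pos_of_ne_zero hb0) ((padicValNat_dvd_iff_le (n := 2) hb0).mpr h)
  omega

/-- The shape of `f` in the theorem; `g` is the case `a = 0`. -/
noncomputable def fourTermPoly {R : Type*} [CommRing R] (n b : ℕ) (a β c : R) : R[X] :=
  X ^ n + C a * X ^ (n - b + 1) + C β * X ^ (n - b) - C c

section FourTermPoly

variable {R : Type*} [CommRing R] {n b : ℕ} {a β c : R}

theorem coeff_fourTermPoly (hb : 1 < b) (hbn : b < n) (i : ℕ) :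
    (fourTermPoly n b a β c).coeff i = if i = n then 1 else if i = n - b + 1 then a
      else if i = n - b then β else if i = 0 then -c else 0 := by
  simp only [fourTermPoly, coeff_sub, coeff_add, coeff_C_mul, coeff_X_pow, coeff_C]
  split_ifs <;> first | (exfalso; omega) | ring

theorem natDegree_fourTermPoly_le (hb : 1 < b) (hbn : b < n) :
    (fourTermPoly n b a β c).natDegree ≤ n := by
  unfold fourTermPoly
  compute_degree
  all_goals omega

theorem monic_fourTermPoly [Nontrivial R] (hb : 1 < b) (hbn : b < n) :
    (fourTermPoly n b a β c).Monic :=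
  monic_of_natDegree_le_of_coeff_eq_one n (natDegree_fourTermPoly_le hb hbn)
    (by simp [coeff_fourTermPoly hb hbn])

theorem natDegree_fourTermPoly [Nontrivial R] (hb : 1 < b) (hbn : b < n) :
    (fourTermPoly n b a β c).natDegree = n :=
  le_antisymm (natDegree_fourTermPoly_le hb hbn)
    (le_natDegree_of_ne_zero (by simp [coeff_fourTermPoly hb hbn]))

theorem fourTermPoly_zero : fourTermPoly n b 0 β c = X ^ n + C β * X ^ (n - b) - C c := by
  simp [fourTermPoly]

end FourTermPoly

theorem ExtValuation.minpoly_eq_fourTermPoly {K L : Type} [Field K] [Field L] [Algebra K L]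
    {v : L → ℚ} {n b : ℕ} (hv : ExtValuation K L v n) (hb : 1 < b) (hbn : b < n) {a β c : K}
    (ha : a ≠ 0 → 1 ≤ v (algebraMap K L a)) (hβ : β ≠ 0 → 1 ≤ v (algebraMap K L β))
    (hc : c ≠ 0) (hvc : v (algebraMap K L c) = 1) {x : L}
    (hx : aeval x (fourTermPoly n b a β c) = 0) :
    v x = 1 / n ∧ minpoly K x = fourTermPoly n b a β c := by
  set F := fourTermPoly n b a β c
  have hcoeff : ∀ i, F.coeff i = if i = n then 1 else if i = n - b + 1 then a
      else if i = n - b then β else if i = 0 then -c else 0 := coeff_fourTermPoly hb hbn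
  have hF : F.Monic := monic_fourTermPoly hb hbn
  have hdeg : F.natDegree = n := natDegree_fourTermPoly hb hbn
  have hF0 : F.coeff 0 = -c := by
    rw [hcoeff, if_neg (by omega), if_neg (by omega), if_neg (by omega), if_pos rfl]
  have hvF0 : v (algebraMap K L (F.coeff 0)) = 1 := by
    rw [hF0, _root_.map_neg, hv.map_neg ((_root_.map_ne_zero _).mpr hc), hvc]
  have hvx : v x = 1 / n := by
    refine hdeg ▸ hv.map_eq_of_aeval_eisenstein_eq_zero hF (by omega) (fun i hi => ?_)
      (by simpa [hF0]) hvF0 hx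
    rw [hcoeff]
    split_ifs
    · omega
    · exact or_iff_not_imp_left.mpr ha
    · exact or_iff_not_imp_left.mpr hβ
    · exact Or.inr (by rw [← hvF0, hF0])
    · exact Or.inl rfl
  exact ⟨hvx, hv.minpoly_eq_of_aeval_eq_zero (ne_zero_of_aeval_eq_zero (by simpa [hF0]) hx) hvx
    hF hdeg hx⟩

theorem ENat.two_sub_one : (2 : ℕ∞) - 1 = 1 := by decide

theorem ENat.natCast_mul_top_sub {n : ℕ} (hn : n ≠ 0) (h : ℕ) : (n : ℕ∞) * ⊤ - h = ⊤ := by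
  simp [hn]

section InseparabilityIndices

variable {p n : ℕ} {w : ℕ → ℕ∞}

theorem itildeIdx_le {j h : ℕ} (h1 : 1 ≤ h) (hn : h ≤ n) (hj : padicValNat p h ≤ j) :
    itildeIdx p n w j ≤ n * w h - h :=
  iInf_le_of_le ⟨h, h1, hn, hj⟩ le_rfl

theorem le_itildeIdx {j : ℕ} {c : ℕ∞}
    (H : ∀ h, 1 ≤ h → h ≤ n → padicValNat p h ≤ j → c ≤ n * w h - h) : c ≤ itildeIdx p n w j :=
  le_iInf fun h => H h.1 h.2.1 h.2.2.1 h.2.2.2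

theorem insepIdx_two_zero (eK : ℕ∞) :
    insepIdx p n 2 eK w 0 = itildeIdx p n w 0 ⊓ (itildeIdx p n w 1 + n * eK) ⊓
      (itildeIdx p n w 2 + 2 * n * eK) := by
  apply le_antisymm
  · refine le_inf (le_inf (iInf_le_of_le ⟨0, le_rfl, by norm_num⟩ ?_)
      (iInf_le_of_le ⟨1, by norm_num, by norm_num⟩ ?_)) (iInf_le_of_le ⟨2, by norm_num, le_rfl⟩ ?_)
      <;> simp
  · refine le_iInf fun ⟨j', _, hj'⟩ => ?_
    interval_cases j' <;> simp

theorem insepIdx_two_one (eK : ℕ∞) :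
    insepIdx p n 2 eK w 1 = itildeIdx p n w 1 ⊓ (itildeIdx p n w 2 + n * eK) := by
  apply le_antisymm
  · refine le_inf (iInf_le_of_le ⟨1, le_rfl, by norm_num⟩ ?_)
      (iInf_le_of_le ⟨2, by norm_num, le_rfl⟩ ?_) <;> simp [ENat.two_sub_one]
  · refine le_iInf fun ⟨j', hj1, hj2⟩ => ?_
    interval_cases j' <;> simp [ENat.two_sub_one]

theorem insepIdx_two_two (eK : ℕ∞) : insepIdx p n 2 eK w 2 = itildeIdx p n w 2 := by
  apply le_antisymm
  · exact iInf_le_of_le ⟨2, le_rfl, le_rfl⟩ (by simp)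
  · refine le_iInf fun ⟨j', hj1, hj2⟩ => ?_
    obtain rfl : j' = 2 := by omega
    simp

end InseparabilityIndices

section CoefficientPattern

variable {p : ℕ} {w : ℕ → ℕ∞} {A e b : ℕ}

theorem itildeIdx_eq_zero {n j : ℕ} (hn : 1 ≤ n) (hj : padicValNat p n ≤ j) (hw : w n = 1) :
    itildeIdx p n w j = 0 :=
  nonpos_iff_eq_zero.mp ((itildeIdx_le hn le_rfl hj).trans (by simp [hw]))

theorem natCast_sub_le_mul_sub [Fact p.Prime] (hwb' : ((A + e : ℕ) : ℕ∞) ≤ w (b - 1))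
    (hw : ∀ h, 1 ≤ h → h ≤ p ^ 2 → h ≠ b - 1 → h ≠ b → h ≠ p ^ 2 → w h = ⊤)
    {h : ℕ} (h1 : 1 ≤ h) (hn : h ≤ p ^ 2) (hhb : h ≠ b) (hp2 : h ≠ p ^ 2) :
    ((p ^ 2 * (A + e) - (b - 1) : ℕ) : ℕ∞) ≤ (p ^ 2 : ℕ) * w h - h := by
  by_cases hhb' : h = b - 1
  · subst hhb'
    rw [ENat.natCast_sub, Nat.cast_mul]
    gcongr
  · rw [hw h h1 hn hhb' hhb hp2, ENat.natCast_mul_top_sub (NeZero.ne _)]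
    exact le_top

theorem itildeIdx_one_eq [Fact p.Prime] (hb : padicValNat p b = 1) (hbn : b < p ^ 2)
    (hwb : w b = A) (hwb' : ((A + e : ℕ) : ℕ∞) ≤ w (b - 1))
    (hw : ∀ h, 1 ≤ h → h ≤ p ^ 2 → h ≠ b - 1 → h ≠ b → h ≠ p ^ 2 → w h = ⊤) :
    itildeIdx p (p ^ 2) w 1 = ((p ^ 2 * A - b : ℕ) : ℕ∞) := by
  have hb0 : b ≠ 0 := by rintro rfl; simp at hb
  apply le_antisymm
  · refine (itildeIdx_le (by omega) hbn.le hb.le).trans ?_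
    simp [hwb, ENat.natCast_sub]
  · refine le_itildeIdx fun h h1 hn hj => ?_
    by_cases hhb : h = b
    · simp [hhb, hwb, ENat.natCast_sub]
    have hp2 : h ≠ p ^ 2 := by rintro rfl; simp at hj
    refine le_trans ?_ (natCast_sub_le_mul_sub hwb' hw h1 hn hhb hp2)
    exact_mod_cast tsub_le_tsub (Nat.mul_le_mul_left _ (Nat.le_add_right A e)) (Nat.sub_le b 1)

theorem le_itildeIdx_zero [Fact p.Prime] (hb : padicValNat p b = 1)
    (hwb' : ((A + e : ℕ) : ℕ∞) ≤ w (b - 1))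
    (hw : ∀ h, 1 ≤ h → h ≤ p ^ 2 → h ≠ b - 1 → h ≠ b → h ≠ p ^ 2 → w h = ⊤) :
    ((p ^ 2 * (A + e) - b : ℕ) : ℕ∞) ≤ itildeIdx p (p ^ 2) w 0 := by
  refine le_itildeIdx fun h h1 hn hj => ?_
  have hhb : h ≠ b := by rintro rfl; omega
  have hp2 : h ≠ p ^ 2 := by rintro rfl; simp at hj
  refine le_trans ?_ (natCast_sub_le_mul_sub hwb' hw h1 hn hhb hp2)
  exact_mod_cast Nat.sub_le_sub_left (Nat.sub_le b 1) _

end CoefficientPattern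

theorem insepIdx_of_coeffPattern {p : ℕ} [Fact p.Prime] {w : ℕ → ℕ∞} {A e b : ℕ}
    (hA : 1 ≤ A) (hAe : A ≤ e) (hb : padicValNat p b = 1) (hbn : b < p ^ 2)
    (hwb : w b = A) (hwb' : ((A + e : ℕ) : ℕ∞) ≤ w (b - 1)) (hwn : w (p ^ 2) = 1)
    (hw : ∀ h, 1 ≤ h → h ≤ p ^ 2 → h ≠ b - 1 → h ≠ b → h ≠ p ^ 2 → w h = ⊤) :
    insepIdx p (p ^ 2) 2 e w 0 = ((p ^ 2 * (A + e) - b : ℕ) : ℕ∞) ∧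
      insepIdx p (p ^ 2) 2 e w 1 = ((p ^ 2 * A - b : ℕ) : ℕ∞) ∧
      insepIdx p (p ^ 2) 2 e w 2 = 0 := by
  have hp : 0 < p ^ 2 := pow_pos (Fact.out : p.Prime).pos 2
  have hi2 : itildeIdx p (p ^ 2) w 2 = 0 := itildeIdx_eq_zero hp (by simp) hwn
  have hi1 := itildeIdx_one_eq hb hbn hwb hwb' hw
  have hi0 := le_itildeIdx_zero hb hwb' hw
  have hbA : b ≤ p ^ 2 * A := hbn.le.trans (Nat.le_mul_of_pos_right _ hA)
  have hAe' : p ^ 2 * A ≤ p ^ 2 * e := Nat.mul_le_mul_left _ hAe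
  have hsplit : p ^ 2 * (A + e) = p ^ 2 * A + p ^ 2 * e := mul_add _ _ _
  refine ⟨?_, ?_, ?_⟩
  · have hmid : ((p ^ 2 * A - b : ℕ) : ℕ∞) + (p ^ 2 : ℕ) * e =
        ((p ^ 2 * (A + e) - b : ℕ) : ℕ∞) := by
      norm_cast; omega
    have hlast : ((p ^ 2 * (A + e) - b : ℕ) : ℕ∞) ≤ 0 + 2 * (p ^ 2 : ℕ) * e := by
      rw [zero_add, mul_assoc]
      exact_mod_cast (by omega : p ^ 2 * (A + e) - b ≤ 2 * (p ^ 2 * e))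
    rw [insepIdx_two_zero, hi1, hi2, hmid, inf_eq_right.mpr hi0, inf_eq_left.mpr hlast]
  · have hlast : ((p ^ 2 * A - b : ℕ) : ℕ∞) ≤ 0 + (p ^ 2 : ℕ) * e := by
      norm_cast; omega
    rw [insepIdx_two_one, hi1, hi2, inf_eq_left.mpr hlast]
  · rw [insepIdx_two_two, hi2]

section CoeffVal

variable {K L : Type} [Field K] [Field L] [Algebra K L] {v : L → ℚ} {n : ℕ} {x : L} {h : ℕ}

theorem coeffVal_eq_top (hc : (minpoly K x).coeff (n - h) = 0) : coeffVal K L v n x h = ⊤ :=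
  if_pos hc

theorem coeffVal_eq_of_map_eq {k : ℕ} (hc : (minpoly K x).coeff (n - h) ≠ 0)
    (hk : v (algebraMap K L ((minpoly K x).coeff (n - h))) = k) : coeffVal K L v n x h = k := by
  rw [coeffVal, if_neg hc, hk]
  simp

end CoeffVal

theorem insepIdx_of_aeval_fourTermPoly_eq_zero {p : ℕ} [Fact p.Prime] {K L : Type} [Field K]
    [Field L] [Algebra K L] {v : L → ℚ} (hv : ExtValuation K L v (p ^ 2)) {e : ℕ}
    (he : eAbs K L v p = e) {A b : ℕ} (hA : 1 ≤ A) (hAe : A ≤ e) (hb0 : b ≠ 0) (hpb : p ∣ b)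
    (hbn : b < p ^ 2) {a β c : K} (ha : a ≠ 0 → v (algebraMap K L a) = (A + e : ℕ))
    (hβ : β ≠ 0) (hvβ : v (algebraMap K L β) = A) (hc : c ≠ 0) (hvc : v (algebraMap K L c) = 1)
    {x : L} (hx : aeval x (fourTermPoly (p ^ 2) b a β c) = 0)
    (hgen : Algebra.adjoin K {x} = ⊤) :
    Module.finrank K L = p ^ 2 ∧ v x = 1 / (p ^ 2 : ℚ) ∧
      insepIdx p (p ^ 2) 2 (eAbs K L v p) (coeffVal K L v (p ^ 2) x) 0
        = ((p ^ 2 * (A + e) - b : ℕ) : ℕ∞) ∧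
      insepIdx p (p ^ 2) 2 (eAbs K L v p) (coeffVal K L v (p ^ 2) x) 1
        = ((p ^ 2 * A - b : ℕ) : ℕ∞) ∧
      insepIdx p (p ^ 2) 2 (eAbs K L v p) (coeffVal K L v (p ^ 2) x) 2 = 0 := by
  have hb1 : 1 < b :=
    lt_of_lt_of_le (Fact.out : p.Prime).one_lt (Nat.le_of_dvd (Nat.pos_of_ne_zero hb0) hpb)
  obtain ⟨hvx, hmin⟩ := hv.minpoly_eq_fourTermPoly hb1 hbn
    (fun ha0 => by rw [ha ha0]; exact_mod_cast (by omega : 1 ≤ A + e))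
    (fun _ => by rw [hvβ]; exact_mod_cast hA) hc hvc hx
  have hcoeff := coeff_fourTermPoly (a := a) (β := β) (c := c) hb1 hbn
  refine ⟨?_, by rw [hvx]; push_cast; rfl, ?_⟩
  · have hint : IsIntegral K x := ⟨_, monic_fourTermPoly hb1 hbn, by rwa [← aeval_def]⟩
    rw [(PowerBasis.ofAdjoinEqTop hint hgen).finrank, PowerBasis.ofAdjoinEqTop_dim, hmin,
      natDegree_fourTermPoly hb1 hbn]
  rw [he]
  refine insepIdx_of_coeffPattern hA hAe (padicValNat_eq_one_of_dvd_of_lt_sq hb0 hpb hbn) hbn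
    ?_ ?_ ?_ ?_
  · have hβ' : (minpoly K x).coeff (p ^ 2 - b) = β := by
      rw [hmin, hcoeff, if_neg (by omega), if_neg (by omega), if_pos rfl]
    exact coeffVal_eq_of_map_eq (hβ' ▸ hβ) (by rw [hβ', hvβ])
  · have ha' : (minpoly K x).coeff (p ^ 2 - (b - 1)) = a := by
      rw [hmin, hcoeff, if_neg (by omega), if_pos (by omega)]
    by_cases ha0 : a = 0
    · rw [coeffVal_eq_top (ha'.trans ha0)]
      exact le_top
    · rw [coeffVal_eq_of_map_eq (ha' ▸ ha0) (by rw [ha', ha ha0])]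
  · have hc' : (minpoly K x).coeff (p ^ 2 - p ^ 2) = -c := by
      rw [hmin, hcoeff, if_neg (by omega), if_neg (by omega), if_neg (by omega), if_pos (by omega)]
    exact_mod_cast coeffVal_eq_of_map_eq (k := 1) (hc' ▸ neg_ne_zero.mpr hc)
      (by rw [hc', map_neg, hv.map_neg ((_root_.map_ne_zero _).mpr hc), hvc, Nat.cast_one])
  · intro h h1 h2 h3 h4 h5
    exact coeffVal_eq_top
      (by rw [hmin, hcoeff, if_neg (by omega), if_neg (by omega), if_neg (by omega),
        if_neg (by omega)])

theorem stmt18_general (p : ℕ) [Fact p.Prime]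
    (K : Type) [Field K]
    (L M : Type) [Field L] [Field M] [Algebra K L] [Algebra K M]
    (vL : L → ℚ) (vM : M → ℚ)
    (hvL : ExtValuation K L vL (p ^ 2)) (hvM : ExtValuation K M vM (p ^ 2))
    (πK : K) (hπKL : πK ≠ 0 ∧ vL (algebraMap K L πK) = 1)
    (hπKM : vM (algebraMap K M πK) = 1)
    (e : ℕ) (heL : eAbs K L vL p = (e : ℕ∞)) (heM : eAbs K M vM p = (e : ℕ∞))
    (A1 b1 : ℕ) (hA1 : 1 ≤ A1 ∧ A1 ≤ e)
    (hb1 : p ∣ b1 ∧ p < b1 ∧ b1 < p ^ 2)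
    (f g : Polynomial K)
    (hf : f = X ^ p ^ 2 + C ((-1 : K) ^ (b1 - 1) * πK ^ (A1 + e)) * X ^ (p ^ 2 - b1 + 1)
      + C ((-1 : K) ^ b1 * πK ^ A1) * X ^ (p ^ 2 - b1) - C πK)
    (hg : g = X ^ p ^ 2 + C ((-1 : K) ^ b1 * πK ^ A1) * X ^ (p ^ 2 - b1) - C πK)
    (πL : L) (hrootL : Polynomial.aeval πL f = 0)
    (hgenL : Algebra.adjoin K {πL} = ⊤)
    (πM : M) (hrootM : Polynomial.aeval πM g = 0)
    (hgenM : Algebra.adjoin K {πM} = ⊤) :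
    (Module.finrank K L = p ^ 2 ∧ vL πL = 1 / (p ^ 2 : ℚ) ∧
      insepIdx p (p ^ 2) 2 (eAbs K L vL p) (coeffVal K L vL (p ^ 2) πL) 0
        = ((p ^ 2 * (A1 + e) - b1 : ℕ) : ℕ∞) ∧
      insepIdx p (p ^ 2) 2 (eAbs K L vL p) (coeffVal K L vL (p ^ 2) πL) 1
        = ((p ^ 2 * A1 - b1 : ℕ) : ℕ∞) ∧
      insepIdx p (p ^ 2) 2 (eAbs K L vL p) (coeffVal K L vL (p ^ 2) πL) 2 = 0) ∧
    (Module.finrank K M = p ^ 2 ∧ vM πM = 1 / (p ^ 2 : ℚ) ∧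
      insepIdx p (p ^ 2) 2 (eAbs K M vM p) (coeffVal K M vM (p ^ 2) πM) 0
        = ((p ^ 2 * (A1 + e) - b1 : ℕ) : ℕ∞) ∧
      insepIdx p (p ^ 2) 2 (eAbs K M vM p) (coeffVal K M vM (p ^ 2) πM) 1
        = ((p ^ 2 * A1 - b1 : ℕ) : ℕ∞) ∧
      insepIdx p (p ^ 2) 2 (eAbs K M vM p) (coeffVal K M vM (p ^ 2) πM) 2 = 0) := by
  obtain ⟨hπ, hπL⟩ := hπKL
  obtain ⟨hpb, hpb', hbp⟩ := hb1
  have hb0 : b1 ≠ 0 := by omega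
  have hβ : (-1 : K) ^ b1 * πK ^ A1 ≠ 0 :=
    mul_ne_zero (pow_ne_zero _ (by norm_num)) (pow_ne_zero _ hπ)
  constructor
  · rw [hf] at hrootL
    exact insepIdx_of_aeval_fourTermPoly_eq_zero hvL heL hA1.1 hA1.2 hb0 hpb hbp
      (fun _ => hvL.map_neg_one_pow_mul_pow hπ hπL _ _) hβ
      (hvL.map_neg_one_pow_mul_pow hπ hπL _ _) hπ hπL hrootL hgenL
  · rw [hg, ← fourTermPoly_zero] at hrootM
    exact insepIdx_of_aeval_fourTermPoly_eq_zero hvM heM hA1.1 hA1.2 hb0 hpb hbp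
      (absurd rfl) hβ
      (hvM.map_neg_one_pow_mul_pow hπ hπKM _ _) hπ hπKM hrootM hgenM

/-- Section 8.4: over a finite extension `K` of `ℚ_p` (`p` odd)
with uniformizer `π_K`, for `1 ≤ A₁ ≤ e_K`, `p ∣ b₁`, `p < b₁ < p²`, the
Eisenstein polynomials
`f = X^{p²} + (−1)^{b₁−1} π_K^{A₁+e_K} X^{p²−b₁+1} + (−1)^{b₁} π_K^{A₁} X^{p²−b₁} − π_K`
and `g = X^{p²} + (−1)^{b₁} π_K^{A₁} X^{p²−b₁} − π_K` both generate totally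
ramified extensions of degree `p²` with indices of inseparability
`i₀ = p²(A₁+e_K) − b₁`, `i₁ = p² A₁ − b₁`, `i₂ = 0`. -/
theorem stmt18 (p : ℕ) [Fact p.Prime] (hodd : p ≠ 2)
    (K : Type) [Field K] [Algebra ℚ_[p] K] [FiniteDimensional ℚ_[p] K]
    (L M : Type) [Field L] [Field M] [Algebra K L] [Algebra K M]
    (vL : L → ℚ) (vM : M → ℚ)
    (hvL : ExtValuation K L vL (p ^ 2)) (hvM : ExtValuation K M vM (p ^ 2))
    (πK : K) (hπKL : πK ≠ 0 ∧ vL (algebraMap K L πK) = 1)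
    (hπKM : vM (algebraMap K M πK) = 1)
    (e : ℕ) (heL : eAbs K L vL p = (e : ℕ∞)) (heM : eAbs K M vM p = (e : ℕ∞))
    (A1 b1 : ℕ) (hA1 : 1 ≤ A1 ∧ A1 ≤ e)
    (hb1 : p ∣ b1 ∧ p < b1 ∧ b1 < p ^ 2)
    (f g : Polynomial K)
    (hf : f = X ^ p ^ 2 + C ((-1 : K) ^ (b1 - 1) * πK ^ (A1 + e)) * X ^ (p ^ 2 - b1 + 1)
      + C ((-1 : K) ^ b1 * πK ^ A1) * X ^ (p ^ 2 - b1) - C πK)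
    (hg : g = X ^ p ^ 2 + C ((-1 : K) ^ b1 * πK ^ A1) * X ^ (p ^ 2 - b1) - C πK)
    (πL : L) (hrootL : Polynomial.aeval πL f = 0)
    (hgenL : Algebra.adjoin K {πL} = ⊤)
    (πM : M) (hrootM : Polynomial.aeval πM g = 0)
    (hgenM : Algebra.adjoin K {πM} = ⊤) :
    (Module.finrank K L = p ^ 2 ∧ vL πL = 1 / (p ^ 2 : ℚ) ∧
      insepIdx p (p ^ 2) 2 (eAbs K L vL p) (coeffVal K L vL (p ^ 2) πL) 0
        = ((p ^ 2 * (A1 + e) - b1 : ℕ) : ℕ∞) ∧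
      insepIdx p (p ^ 2) 2 (eAbs K L vL p) (coeffVal K L vL (p ^ 2) πL) 1
        = ((p ^ 2 * A1 - b1 : ℕ) : ℕ∞) ∧
      insepIdx p (p ^ 2) 2 (eAbs K L vL p) (coeffVal K L vL (p ^ 2) πL) 2 = 0) ∧
    (Module.finrank K M = p ^ 2 ∧ vM πM = 1 / (p ^ 2 : ℚ) ∧
      insepIdx p (p ^ 2) 2 (eAbs K M vM p) (coeffVal K M vM (p ^ 2) πM) 0
        = ((p ^ 2 * (A1 + e) - b1 : ℕ) : ℕ∞) ∧
      insepIdx p (p ^ 2) 2 (eAbs K M vM p) (coeffVal K M vM (p ^ 2) πM) 1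
        = ((p ^ 2 * A1 - b1 : ℕ) : ℕ∞) ∧
      insepIdx p (p ^ 2) 2 (eAbs K M vM p) (coeffVal K M vM (p ^ 2) πM) 2 = 0) :=
  stmt18_general p K L M vL vM hvL hvM πK hπKL hπKM e heL heM A1 b1 hA1 hb1 f g hf hg πL hrootL
    hgenL πM hrootM hgenM
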